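/- arXiv:1808.04233 — 2 statements merged into one kernel-verified Lean document; each statement's English description precedes it below -/
import Mathlib

section
/- For n ≥ 3, k_n = sqrt((n-1)/2) · Γ((n-2)/2)/Γ((n-1)/2) > 1. -/
/-!
Log-convexity of `Γ` at the midpoint of `x` and `x + 1` gives
`Γ(x + 1/2)² ≤ Γ(x) Γ(x + 1) = x Γ(x)²`, i.e. `Γ(x + 1/2) ≤ √x Γ(x) < √(x + 1/2) Γ(x)`.
With `x = (n - 2)/2` this is `k_n > 1`.
-/

open Real

lemma Real.Gamma_add_half_le_sqrt_mul_Gamma {x : ℝ} (hx : 0 < x) :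
    Gamma (x + 1 / 2) ≤ √x * Gamma x := by
  have hG : 0 ≤ Gamma x := (Gamma_pos_of_pos hx).le
  calc Gamma (x + 1 / 2) = Gamma (1 / 2 * x + 1 / 2 * (x + 1)) := by ring_nf
    _ ≤ Gamma x ^ (1 / 2 : ℝ) * Gamma (x + 1) ^ (1 / 2 : ℝ) :=
      Gamma_mul_add_mul_le_rpow_Gamma_mul_rpow_Gamma hx (by linarith)
        (by norm_num) (by norm_num) (by norm_num)
    _ = √x * Gamma x := by
      rw [Gamma_add_one hx.ne', ← sqrt_eq_rpow, ← sqrt_eq_rpow, sqrt_mul hx.le,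
        mul_left_comm, mul_self_sqrt hG]

lemma Real.one_lt_sqrt_add_half_mul_Gamma_div_Gamma_add_half {x : ℝ} (hx : 0 < x) :
    1 < √(x + 1 / 2) * Gamma x / Gamma (x + 1 / 2) := by
  rw [one_lt_div (Gamma_pos_of_pos (by linarith))]
  calc Gamma (x + 1 / 2) ≤ √x * Gamma x := Gamma_add_half_le_sqrt_mul_Gamma hx
    _ < √(x + 1 / 2) * Gamma x :=
      mul_lt_mul_of_pos_right (sqrt_lt_sqrt hx.le (by linarith)) (Gamma_pos_of_pos hx)

theorem kn_gt_one (n : ℕ) (hn : 3 ≤ n) :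
    1 < Real.sqrt (((n : ℝ) - 1) / 2) * Real.Gamma (((n : ℝ) - 2) / 2)
          / Real.Gamma (((n : ℝ) - 1) / 2) := by
  have hx : 0 < ((n : ℝ) - 2) / 2 := by
    have : (3 : ℝ) ≤ n := by exact_mod_cast hn
    linarith
  have hshift : ((n : ℝ) - 1) / 2 = ((n : ℝ) - 2) / 2 + 1 / 2 := by ring
  rw [hshift]
  exact one_lt_sqrt_add_half_mul_Gamma_div_Gamma_add_half hx
end

section
/- If (R_t) is stationary with constant variance σ² > 0 and autocorrelation ρ_k at lag k, expected return μ and risk-free rate R_f with μ ≠ R_f, and SR = (μ−R_f)/σ, SR(q) = q(μ−R_f)/sqrt(Var[R_t(q)]), then SR(q)/SR = sqrt(q / (1 + (2/q)·Σ_{k=1}^{q−1} (q−k)·ρ_k)). -/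
open MeasureTheory ProbabilityTheory Finset

/-- Covariance of two real random variables. -/
noncomputable def cov {Ω : Type*} [MeasurableSpace Ω] (X Y : Ω → ℝ) (μ : Measure Ω) : ℝ :=
  ∫ ω, (X ω - ∫ x, X x ∂μ) * (Y ω - ∫ x, Y x ∂μ) ∂μ

/-- Correlation of two real random variables. -/
noncomputable def corr {Ω : Type*} [MeasurableSpace Ω] (X Y : Ω → ℝ) (μ : Measure Ω) : ℝ :=
  cov X Y μ / (Real.sqrt (variance X μ) * Real.sqrt (variance Y μ))

/-! The variance of `R_t(q)` is the sum of the `q × q` Toeplitz matrix of covariances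
`σ² ρ_{|i - j|}`: the diagonal contributes `q σ²`, and lag `k ≥ 1` occupies `2 (q - k)`
off-diagonal entries. So `Var[R_t(q)] = σ² (q + 2 ∑ (q - k) ρ_k)`, and both sides of the claim
equal `q / √(q + 2 ∑ (q - k) ρ_k)`. -/

theorem sum_range_natAbs_sub_left {M : Type*} [AddCommMonoid M] (f : ℕ → M) (q : ℕ) :
    ∑ i ∈ range q, f ((q : ℤ) - i).natAbs = ∑ k ∈ Ico 1 (q + 1), f k := by
  rw [sum_Ico_eq_sum_range, ← sum_range_reflect]
  refine sum_congr rfl fun i hi => congrArg f ?_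
  rw [mem_range] at hi
  omega

theorem sum_Ico_one_succ_sub_mul {R : Type*} [CommRing R] (f : ℕ → R) (q : ℕ) :
    ∑ k ∈ Ico 1 (q + 1), ((q : R) - k) * f k = ∑ k ∈ Ico 1 q, ((q : R) - k) * f k := by
  rcases Nat.eq_zero_or_pos q with rfl | hq
  · simp
  · simp [sum_Ico_succ_top hq]

theorem sum_range_sum_range_natAbs_sub {R : Type*} [CommRing R] (f : ℕ → R) (q : ℕ) :
    ∑ i ∈ range q, ∑ j ∈ range q, f ((i : ℤ) - j).natAbs
      = q * f 0 + 2 * ∑ k ∈ Ico 1 q, ((q : R) - k) * f k := by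
  induction q with
  | zero => simp
  | succ q ih =>
    have hcol : ∑ i ∈ range q, f ((i : ℤ) - q).natAbs = ∑ k ∈ Ico 1 (q + 1), f k := by
      simp_rw [← Int.natAbs_neg (_ - (q : ℤ)), neg_sub, sum_range_natAbs_sub_left]
    have hweights : ∑ k ∈ Ico 1 (q + 1), ((↑(q + 1) : R) - k) * f k
        = ∑ k ∈ Ico 1 q, ((q : R) - k) * f k + ∑ k ∈ Ico 1 (q + 1), f k := by
      rw [← sum_Ico_one_succ_sub_mul f q, ← sum_add_distrib]
      refine sum_congr rfl fun k _ => ?_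
      push_cast
      ring
    simp only [sum_range_succ, sum_add_distrib, ih, hcol, sum_range_natAbs_sub_left, hweights,
      sub_self, Int.natAbs_zero]
    push_cast
    ring

theorem Real.sqrt_div_one_add_div_mul {q : ℝ} (hq : 0 ≤ q) (b T : ℝ) :
    √(q / (1 + b / q * T)) = q / √(q + b * T) := by
  rcases hq.eq_or_lt with rfl | hq
  · simp
  · rw [show 1 + b / q * T = (q + b * T) / q by field_simp, div_div_eq_mul_div,
      Real.sqrt_div (by positivity), Real.sqrt_mul_self hq.le]

section

variable {Ω : Type*} [MeasurableSpace Ω] {μ : Measure Ω}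

theorem cov_eq_covariance (X Y : Ω → ℝ) : cov X Y μ = covariance X Y μ := rfl

theorem covariance_eq_corr_mul {X Y : Ω → ℝ} (hX : variance X μ ≠ 0) (hY : variance Y μ ≠ 0) :
    covariance X Y μ = corr X Y μ * (√(variance X μ) * √(variance Y μ)) := by
  have hX' : 0 < variance X μ := (variance_nonneg X μ).lt_of_ne' hX
  have hY' : 0 < variance Y μ := (variance_nonneg Y μ).lt_of_ne' hY
  rw [corr, cov_eq_covariance, div_mul_cancel₀ _ (by positivity)]

variable {R : ℤ → Ω → ℝ} {σ : ℝ} {ρ : ℕ → ℝ}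

theorem covariance_eq_sq_mul_of_corr (hσ : σ ≠ 0) (hvar : ∀ u, variance (R u) μ = σ ^ 2)
    (hcorr : ∀ u v : ℤ, corr (R u) (R v) μ = ρ (v - u).natAbs) (u v : ℤ) :
    covariance (R u) (R v) μ = σ ^ 2 * ρ (v - u).natAbs := by
  have hσ2 : σ ^ 2 ≠ 0 := pow_ne_zero 2 hσ
  rw [covariance_eq_corr_mul ((hvar u).trans_ne hσ2) ((hvar v).trans_ne hσ2), hcorr, hvar, hvar,
    Real.mul_self_sqrt (sq_nonneg σ), mul_comm]

theorem autocorr_zero_eq_one (h0 : AEMeasurable (R 0) μ) (hσ : σ ≠ 0)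
    (hvar : ∀ u, variance (R u) μ = σ ^ 2)
    (hcorr : ∀ u v : ℤ, corr (R u) (R v) μ = ρ (v - u).natAbs) : ρ 0 = 1 := by
  have h := covariance_eq_sq_mul_of_corr hσ hvar hcorr 0 0
  rw [covariance_self h0, hvar, sub_self, Int.natAbs_zero] at h
  exact (mul_eq_left₀ (pow_ne_zero 2 hσ)).mp h.symm

theorem variance_sum_range_sub_eq [IsFiniteMeasure μ] (hL2 : ∀ u, MemLp (R u) 2 μ)
    (hσ : σ ≠ 0) (hvar : ∀ u, variance (R u) μ = σ ^ 2)
    (hcorr : ∀ u v : ℤ, corr (R u) (R v) μ = ρ (v - u).natAbs) (t : ℤ) (q : ℕ) :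
    variance (fun ω => ∑ i ∈ range q, R (t - i) ω) μ
      = σ ^ 2 * (q + 2 * ∑ k ∈ Icc 1 (q - 1), ((q : ℝ) - k) * ρ k) := by
  have hIcc : Icc 1 (q - 1) = Ico 1 q := by
    ext k
    simp only [mem_Icc, mem_Ico]
    omega
  rw [variance_fun_sum' fun i _ => hL2 _]
  simp_rw [covariance_eq_sq_mul_of_corr hσ hvar hcorr, sub_sub_sub_cancel_left, ← mul_sum,
    sum_range_sum_range_natAbs_sub, autocorr_zero_eq_one (hL2 0).aemeasurable hσ hvar hcorr,
    hIcc, mul_one]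

end

theorem sharpe_ratio_q_period_general
    {Ω : Type*} [MeasurableSpace Ω] (μ : Measure Ω) [IsProbabilityMeasure μ]
    (R : ℤ → Ω → ℝ) (σ μR Rf : ℝ) (ρ : ℕ → ℝ) (t : ℤ) (q : ℕ)
    (hL2 : ∀ u : ℤ, MemLp (R u) 2 μ)
    (hσ : 0 < σ)
    (hvar : ∀ u : ℤ, variance (R u) μ = σ ^ 2)
    (hcorr : ∀ u v : ℤ, corr (R u) (R v) μ = ρ ((v - u).natAbs))
    (hμ : μR ≠ Rf) :
    ((q : ℝ) * (μR - Rf) / Real.sqrt (variance (fun ω => ∑ i ∈ range q, R (t - i) ω) μ))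
        / ((μR - Rf) / σ)
      = Real.sqrt ((q : ℝ) /
          (1 + (2 / (q : ℝ)) * ∑ k ∈ Icc 1 (q - 1), ((q : ℝ) - (k : ℝ)) * ρ k)) := by
  rw [variance_sum_range_sub_eq hL2 hσ.ne' hvar hcorr, Real.sqrt_mul (sq_nonneg σ),
    Real.sqrt_sq hσ.le, Real.sqrt_div_one_add_div_mul (Nat.cast_nonneg q)]
  field_simp [sub_ne_zero.mpr hμ]

theorem sharpe_ratio_q_period
    {Ω : Type*} [MeasurableSpace Ω] (μ : Measure Ω) [IsProbabilityMeasure μ]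
    (R : ℤ → Ω → ℝ) (σ μR Rf : ℝ) (ρ : ℕ → ℝ) (t : ℤ) (q : ℕ) (hq : 1 ≤ q)
    (hL2 : ∀ u : ℤ, MemLp (R u) 2 μ)
    (hσ : 0 < σ)
    (hmean : ∀ u : ℤ, ∫ ω, R u ω ∂μ = μR)
    (hvar : ∀ u : ℤ, variance (R u) μ = σ ^ 2)
    (hcorr : ∀ u v : ℤ, corr (R u) (R v) μ = ρ ((v - u).natAbs))
    (hμ : μR ≠ Rf)
    (hVpos : 0 < variance (fun ω => ∑ i ∈ range q, R (t - i) ω) μ) :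
    ((q : ℝ) * (μR - Rf) / Real.sqrt (variance (fun ω => ∑ i ∈ range q, R (t - i) ω) μ))
        / ((μR - Rf) / σ)
      = Real.sqrt ((q : ℝ) /
          (1 + (2 / (q : ℝ)) * ∑ k ∈ Icc 1 (q - 1), ((q : ℝ) - (k : ℝ)) * ρ k)) :=
  sharpe_ratio_q_period_general μ R σ μR Rf ρ t q hL2 hσ hvar hcorr hμ
end
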